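/- For every nonzero integer t, √5 · artanh(((1 - t + 2t²)/(1 - t + 3t² - 2t³ + 4t⁴)) · t√5) = (5/(2²⁰ t³⁹)) · ∑_{k=0}^∞ (1/(2²⁰ t⁴⁰)^k) · ∑_{j=1}^{40} a_j/(40k + j), where (a₁,...,a₄₀) = (2¹⁹t³⁸, 0, 2¹⁸t³⁶, 2¹⁸t³⁵, 0, 0, -2¹⁶t³², 2¹⁶t³¹, 2¹⁵t³⁰, 0, -2¹⁴t²⁸, -2¹⁴t²⁷, 2¹³t²⁶, 0, 0, -2¹²t²³, -2¹¹t²², 0, -2¹⁰t²⁰, 0, -2⁹t¹⁸, 0, -2⁸t¹⁶, -2⁸t¹⁵, 0, 0, 2⁶t¹², -2⁶t¹¹, -2⁵t¹⁰, 0, 2⁴t⁸, 2⁴t⁷, -2³t⁶, 0, 0, 2²t³, 2t², 0, 1, 0). -/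

import Mathlib

/-!
Expanding `1 / (1 - y⁴⁰ / (2²⁰ t⁴⁰))` geometrically turns the series into
`∫₀¹ 5 t A(y) / (2²⁰ t⁴⁰ - y⁴⁰) dy`, where `A(y) = ∑ aⱼ y^(j-1)`. For the quartics `Q`, `P`
below, `Q² - 5 P²` divides `2²⁰ t⁴⁰ - y⁴⁰`, and the integrand equals
`5 (P' Q - P Q') / (Q² - 5 P²)`, the derivative of
`(√5 / 2) (log (Q + √5 P) - log (Q - √5 P)) = √5 artanh (√5 P / Q)`. Both conjugates `Q ± √5 P`
are sums of squares, positive when `t ≠ 0`. The antiderivative vanishes at `y = 0`, and at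
`y = 1` it is the left-hand side.
-/

/-- The real inverse hyperbolic tangent: artanh x = (1/2) log ((1+x)/(1-x)). -/
noncomputable def Real.artanhLog (x : ℝ) : ℝ := (1 / 2) * Real.log ((1 + x) / (1 - x))

/-- The coefficient vector (a₁, ..., a₄₀) of the BBP-type formula, as a function of `t`,
indexed by `j ∈ Fin 40` (so `bbpCoeff t j` corresponds to `a_{j+1}`). -/
def bbpCoeff (t : ℝ) : Fin 40 → ℝ :=
  ![2 ^ 19 * t ^ 38, 0, 2 ^ 18 * t ^ 36, 2 ^ 18 * t ^ 35, 0, 0, -(2 ^ 16) * t ^ 32,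
    2 ^ 16 * t ^ 31, 2 ^ 15 * t ^ 30, 0, -(2 ^ 14) * t ^ 28, -(2 ^ 14) * t ^ 27,
    2 ^ 13 * t ^ 26, 0, 0, -(2 ^ 12) * t ^ 23, -(2 ^ 11) * t ^ 22, 0, -(2 ^ 10) * t ^ 20, 0,
    -(2 ^ 9) * t ^ 18, 0, -(2 ^ 8) * t ^ 16, -(2 ^ 8) * t ^ 15, 0, 0, 2 ^ 6 * t ^ 12,
    -(2 ^ 6) * t ^ 11, -(2 ^ 5) * t ^ 10, 0, 2 ^ 4 * t ^ 8, 2 ^ 4 * t ^ 7, -(2 ^ 3) * t ^ 6,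
    0, 0, 2 ^ 2 * t ^ 3, 2 * t ^ 2, 0, 1, 0]

open Real

theorem tsum_mul_integral_mul_pow_eq {f : ℝ → ℝ} (hf : Continuous f) {b : ℝ} (hb : |b| < 1)
    (n : ℕ) :
    ∑' k : ℕ, b ^ k * ∫ y in (0 : ℝ)..1, f y * y ^ (n * k) =
      ∫ y in (0 : ℝ)..1, f y / (1 - b * y ^ n) := by
  have hF : ∀ k : ℕ,
      (fun y => b ^ k * (f y * y ^ (n * k))) = fun y => f y * (b * y ^ n) ^ k := by
    intro k
    funext y
    rw [mul_pow, ← pow_mul]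
    ring
  simp_rw [← intervalIntegral.integral_const_mul, hF]
  refine (intervalIntegral.hasSum_integral_of_dominated_convergence
    (fun k y => |f y| * |b| ^ k) (fun k => by fun_prop) ?_ ?_ ?_ ?_).tsum_eq
  · refine fun k => Filter.Eventually.of_forall fun y hy => ?_
    rw [Set.uIoc_of_le zero_le_one] at hy
    rw [norm_mul, norm_pow, Real.norm_eq_abs, Real.norm_eq_abs, abs_mul, abs_pow,
      abs_of_nonneg hy.1.le]
    gcongr
    · exact mul_nonneg (abs_nonneg b) (pow_nonneg hy.1.le n)
    · exact mul_le_of_le_one_right (abs_nonneg b) (pow_le_one₀ hy.1.le hy.2)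
  · exact Filter.Eventually.of_forall fun y _ =>
      (summable_geometric_of_lt_one (abs_nonneg b) hb).mul_left _
  · simp_rw [tsum_mul_left]
    exact (hf.abs.mul continuous_const).intervalIntegrable 0 1
  · refine Filter.Eventually.of_forall fun y hy => ?_
    rw [Set.uIoc_of_le zero_le_one] at hy
    have hby : |b * y ^ n| < 1 := by
      rw [abs_mul, abs_pow, abs_of_nonneg hy.1.le]
      exact (mul_le_of_le_one_right (abs_nonneg b) (pow_le_one₀ hy.1.le hy.2)).trans_lt hb
    simpa [div_eq_mul_inv] using (hasSum_geometric_of_abs_lt_one hby).mul_left (f y)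

theorem integral_sum_mul_pow_mul_pow {m : ℕ} (c : Fin m → ℝ) (N : ℕ) :
    ∫ y in (0 : ℝ)..1, (∑ j : Fin m, c j * y ^ (j : ℕ)) * y ^ N =
      ∑ j : Fin m, c j / (N + j + 1) := by
  simp_rw [Finset.sum_mul, mul_assoc, ← pow_add]
  rw [intervalIntegral.integral_finsetSum fun j _ =>
    (by fun_prop : Continuous _).intervalIntegrable 0 1]
  refine Finset.sum_congr rfl fun j _ => ?_
  rw [intervalIntegral.integral_const_mul, integral_pow]
  push_cast
  ring_nf

theorem tsum_pow_mul_sum_div_eq_integral {m : ℕ} (c : Fin m → ℝ) {b : ℝ} (hb : |b| < 1)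
    (n : ℕ) :
    ∑' k : ℕ, b ^ k * ∑ j : Fin m, c j / (n * k + j + 1) =
      ∫ y in (0 : ℝ)..1, (∑ j : Fin m, c j * y ^ (j : ℕ)) / (1 - b * y ^ n) := by
  rw [← tsum_mul_integral_mul_pow_eq (by fun_prop) hb n]
  simp_rw [integral_sum_mul_pow_mul_pow, Nat.cast_mul]

theorem HasDerivAt.log_add_mul_sub_log_sub_mul {Q P : ℝ → ℝ} {Q' P' s y : ℝ}
    (hQ : HasDerivAt Q Q' y) (hP : HasDerivAt P P' y)
    (hU : Q y + s * P y ≠ 0) (hV : Q y - s * P y ≠ 0) :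
    HasDerivAt (fun z => (Real.log (Q z + s * P z) - Real.log (Q z - s * P z)) / 2)
      (s * (P' * Q y - P y * Q') / (Q y ^ 2 - s ^ 2 * P y ^ 2)) y := by
  have hUV : Q y ^ 2 - s ^ 2 * P y ^ 2 = (Q y + s * P y) * (Q y - s * P y) := by ring
  refine ((((hQ.add (hP.const_mul s)).log hU).sub
    ((hQ.sub (hP.const_mul s)).log hV)).div_const 2).congr_deriv ?_
  simp only [Pi.add_apply, Pi.sub_apply]
  rw [hUV]
  field_simp
  ring

theorem Real.artanhLog_div {q a : ℝ} (hp : 0 < q + a) (hm : 0 < q - a) :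
    artanhLog (a / q) = (log (q + a) - log (q - a)) / 2 := by
  have hq : q ≠ 0 := by linarith
  rw [artanhLog, ← log_div hp.ne' hm.ne', one_add_div hq, one_sub_div hq,
    div_div_div_cancel_right₀ hq]
  ring

/-- Homogenized in `y` so that `bbpQ t 1` is the denominator in the argument of `artanh` and
`bbpP t 1 = t (1 - t + 2 t²)`. -/
def bbpQ (x y : ℝ) : ℝ := y ^ 4 - x * y ^ 3 + 3 * x ^ 2 * y ^ 2 - 2 * x ^ 3 * y + 4 * x ^ 4

def bbpP (x y : ℝ) : ℝ := x * y ^ 3 - x ^ 2 * y ^ 2 + 2 * x ^ 3 * y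

theorem hasDerivAt_bbpQ (x y : ℝ) :
    HasDerivAt (bbpQ x) (4 * y ^ 3 - 3 * x * y ^ 2 + 6 * x ^ 2 * y - 2 * x ^ 3) y := by
  have h := ((((hasDerivAt_pow 4 y).sub ((hasDerivAt_pow 3 y).const_mul x)).add
    ((hasDerivAt_pow 2 y).const_mul (3 * x ^ 2))).sub
    ((hasDerivAt_id' y).const_mul (2 * x ^ 3))).add_const (4 * x ^ 4)
  exact h.congr_deriv (by push_cast; ring)

theorem hasDerivAt_bbpP (x y : ℝ) :
    HasDerivAt (bbpP x) (3 * x * y ^ 2 - 2 * x ^ 2 * y + 2 * x ^ 3) y := by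
  have h := (((hasDerivAt_pow 3 y).const_mul x).sub
    ((hasDerivAt_pow 2 y).const_mul (x ^ 2))).add ((hasDerivAt_id' y).const_mul (2 * x ^ 3))
  exact h.congr_deriv (by push_cast; ring)

theorem bbpQ_add_mul_bbpP_pos {x s : ℝ} (hx : x ≠ 0) (hs : s ^ 2 = 5) (y : ℝ) :
    0 < bbpQ x y + s * bbpP x y := by
  have hs3 : 0 < (3 - s) / 2 := by nlinarith
  have hsos : bbpQ x y + s * bbpP x y =
      (y ^ 2 + (s - 1) / 2 * x * y) ^ 2 + (3 - s) / 2 * (x * y + (s + 1) * x ^ 2) ^ 2 := by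
    unfold bbpQ bbpP
    linear_combination (s / 2 * x ^ 4 - x ^ 2 * y ^ 2 / 4 - x ^ 4 / 2 + x ^ 3 * y) * hs
  rw [hsos]
  rcases eq_or_ne (x * y + (s + 1) * x ^ 2) 0 with h | h
  · have hy : y = -(s + 1) * x := by
      apply mul_left_cancel₀ hx
      linear_combination h
    have ha : y ^ 2 + (s - 1) / 2 * x * y = (2 * s + 4) * x ^ 2 := by
      rw [hy]
      linear_combination x ^ 2 / 2 * hs
    have hs2 : 2 * s + 4 ≠ 0 := by
      intro h'
      nlinarith
    rw [h, ha]
    positivity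
  · positivity

theorem bbpQ_add_sqrt_five_mul_bbpP_pos {x : ℝ} (hx : x ≠ 0) (y : ℝ) :
    0 < bbpQ x y + √5 * bbpP x y :=
  bbpQ_add_mul_bbpP_pos hx (sq_sqrt (by norm_num)) y

theorem bbpQ_sub_sqrt_five_mul_bbpP_pos {x : ℝ} (hx : x ≠ 0) (y : ℝ) :
    0 < bbpQ x y - √5 * bbpP x y := by
  simpa [neg_mul, ← sub_eq_add_neg] using bbpQ_add_mul_bbpP_pos hx (s := -√5) (by simp) y

theorem bbpCoeff_sum_identity (x y : ℝ) :
    x * (∑ j : Fin 40, bbpCoeff x j * y ^ (j : ℕ)) * (bbpQ x y ^ 2 - 5 * bbpP x y ^ 2) =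
      ((3 * x * y ^ 2 - 2 * x ^ 2 * y + 2 * x ^ 3) * bbpQ x y -
        bbpP x y * (4 * y ^ 3 - 3 * x * y ^ 2 + 6 * x ^ 2 * y - 2 * x ^ 3)) *
        (2 ^ 20 * x ^ 40 - y ^ 40) := by
  simp only [Fin.sum_univ_succ, Fin.sum_univ_zero, bbpCoeff, bbpQ, bbpP, Fin.isValue,
    Matrix.cons_val_zero, Matrix.cons_val_one, Matrix.cons_val, Fin.succ_zero_eq_one,
    Fin.succ_one_eq_two, Fin.reduceSucc, Fin.coe_ofNat_eq_mod, Nat.reduceMod, Nat.zero_mod,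
    Nat.one_mod, Nat.mod_succ]
  ring

noncomputable def bbpAntideriv (x y : ℝ) : ℝ :=
  √5 * ((log (bbpQ x y + √5 * bbpP x y) - log (bbpQ x y - √5 * bbpP x y)) / 2)

theorem hasDerivAt_bbpAntideriv {x y : ℝ} (hx : x ≠ 0) (hR : 2 ^ 20 * x ^ 40 - y ^ 40 ≠ 0) :
    HasDerivAt (bbpAntideriv x)
      (5 * x * (∑ j : Fin 40, bbpCoeff x j * y ^ (j : ℕ)) / (2 ^ 20 * x ^ 40 - y ^ 40)) y := by
  have hs : √5 ^ 2 = 5 := sq_sqrt (by norm_num)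
  have hU := bbpQ_add_sqrt_five_mul_bbpP_pos hx y
  have hV := bbpQ_sub_sqrt_five_mul_bbpP_pos hx y
  have hUV : bbpQ x y ^ 2 - 5 * bbpP x y ^ 2 ≠ 0 := by nlinarith [mul_pos hU hV]
  refine (((hasDerivAt_bbpQ x y).log_add_mul_sub_log_sub_mul (hasDerivAt_bbpP x y) hU.ne'
    hV.ne').const_mul √5).congr_deriv ?_
  rw [hs, ← mul_div_assoc, ← mul_assoc, ← sq, hs, div_eq_div_iff hUV hR]
  linear_combination (-5) * bbpCoeff_sum_identity x y

theorem bbpAntideriv_zero (x : ℝ) : bbpAntideriv x 0 = 0 := by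
  simp [bbpAntideriv, bbpP]

theorem bbpAntideriv_one {x : ℝ} (hx : x ≠ 0) :
    bbpAntideriv x 1 = √5 * artanhLog ((1 - x + 2 * x ^ 2) /
      (1 - x + 3 * x ^ 2 - 2 * x ^ 3 + 4 * x ^ 4) * (x * √5)) := by
  have hU := bbpQ_add_sqrt_five_mul_bbpP_pos hx 1
  have hV := bbpQ_sub_sqrt_five_mul_bbpP_pos hx 1
  rw [bbpAntideriv, ← artanhLog_div hU hV]
  have hD : 1 - x + 3 * x ^ 2 - 2 * x ^ 3 + 4 * x ^ 4 ≠ 0 := by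
    simp only [bbpQ] at hU hV
    nlinarith
  simp only [bbpQ, bbpP]
  field_simp

theorem bbp_formula_real {x : ℝ} (hx : 1 < 2 ^ 20 * x ^ 40) :
    √5 * artanhLog ((1 - x + 2 * x ^ 2) / (1 - x + 3 * x ^ 2 - 2 * x ^ 3 + 4 * x ^ 4) *
        (x * √5)) =
      5 / (2 ^ 20 * x ^ 39) * ∑' k : ℕ, (1 / (2 ^ 20 * x ^ 40)) ^ k *
        ∑ j : Fin 40, bbpCoeff x j / (40 * k + (j : ℕ) + 1) := by
  have hx0 : x ≠ 0 := by
    rintro rfl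
    norm_num at hx
  have hR : ∀ y ∈ Set.uIcc (0 : ℝ) 1, 2 ^ 20 * x ^ 40 - y ^ 40 ≠ 0 := by
    intro y hy
    rw [Set.uIcc_of_le zero_le_one] at hy
    nlinarith [pow_le_one₀ hy.1 hy.2 (n := 40)]
  have hb : |1 / (2 ^ 20 * x ^ 40)| < 1 := by
    rw [abs_of_pos (by positivity), div_lt_one (by positivity)]
    exact hx
  have hseries := tsum_pow_mul_sum_div_eq_integral (bbpCoeff x) hb 40
  push_cast at hseries
  have hderiv : ∀ y ∈ Set.uIcc (0 : ℝ) 1, HasDerivAt (bbpAntideriv x)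
      (5 / (2 ^ 20 * x ^ 39) * ((∑ j : Fin 40, bbpCoeff x j * y ^ (j : ℕ)) /
        (1 - 1 / (2 ^ 20 * x ^ 40) * y ^ 40))) y := by
    intro y hy
    refine (hasDerivAt_bbpAntideriv hx0 (hR y hy)).congr_deriv ?_
    have := hR y hy
    field_simp
  rw [← bbpAntideriv_one hx0, hseries, ← intervalIntegral.integral_const_mul,
    intervalIntegral.integral_eq_sub_of_hasDerivAt hderiv (ContinuousOn.intervalIntegrable ?_),
    bbpAntideriv_zero, sub_zero]
  refine continuousOn_const.mul ((by fun_prop : Continuous _).continuousOn.div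
    (by fun_prop) fun y hy => ?_)
  have := hR y hy
  field_simp
  exact div_ne_zero this (by positivity)

theorem bbp_formula_family (t : ℤ) (ht : t ≠ 0) :
    Real.sqrt 5 *
        Real.artanhLog (((1 - (t : ℝ) + 2 * (t : ℝ) ^ 2) /
            (1 - (t : ℝ) + 3 * (t : ℝ) ^ 2 - 2 * (t : ℝ) ^ 3 + 4 * (t : ℝ) ^ 4)) *
          ((t : ℝ) * Real.sqrt 5))
      = (5 / (2 ^ 20 * (t : ℝ) ^ 39)) *
          ∑' k : ℕ, (1 / (2 ^ 20 * (t : ℝ) ^ 40)) ^ k *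
            ∑ j : Fin 40, bbpCoeff (t : ℝ) j / (40 * k + (j : ℕ) + 1) := by
  have ht40 : (1 : ℤ) ≤ t ^ 40 := by
    simpa [Even.pow_abs ⟨20, rfl⟩] using one_le_pow₀ (n := 40) (Int.one_le_abs ht)
  refine bbp_formula_real ?_
  have : (1 : ℝ) ≤ (t : ℝ) ^ 40 := by exact_mod_cast ht40
  linarith
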